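/- Let (u^i)_{i=1}^m be a zero-sum sequence in ℝ^d with ‖u^i‖ ≤ M for all i, for some norm ‖·‖. Then there exists a permutation π of {1,...,m} such that ‖∑_{i=1}^k u^{π(i)}‖ ≤ M·d for each k ∈ {1,...,m}. -/

import Mathlib

/-!
Grinberg–Sevastyanov. Let `d = dim E` and, for a set `A` of indices, let `P(A)` be the polytope
of weights `λ ∈ [0,1]^A` with `∑ λᵢ = |A| - d` and `∑ λᵢ vᵢ = 0`. A point of `P(A)` bounds the
partial sum over `A`, since `∑_A vᵢ = ∑_A (1 - λᵢ) vᵢ` and `∑_A (1 - λᵢ) = d`. As `∑ vᵢ = 0`, the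
constant weights lie in `P(univ)`, and indices can be removed one at a time while keeping
`P(A)` nonempty: shrinking a point of `P(A)` towards `0` lands in the polytope with coordinate
sum `|A| - d - 1`, whose extreme points have at most `d + 1` fractional coordinates (more would
make the vectors `(1, vᵢ)` dependent and put the point inside a segment of the polytope), so an
extreme point has a zero coordinate `i` and lies in `P(A \ {i})`. Once `|A| ≤ d` the triangle
inequality suffices. Enumerating the indices in the reverse order of removal proves the theorem.
-/

open Finset Module Filter Topology

variable {ι E : Type*} [AddCommGroup E] [Module ℝ E]

/-- Weights are extended by zero outside `A`, which makes the polytope compact in `ι → ℝ`. -/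
def steinitzPolytope [Fintype ι] (v : ι → E) (A : Finset ι) (c : ℝ) : Set (ι → ℝ) :=
  {l | (∀ i ∉ A, l i = 0) ∧ (∀ i ∈ A, l i ∈ Set.Icc 0 1) ∧ ∑ i, l i = c ∧ ∑ i, l i • v i = 0}

lemma exists_eq_zero_of_card_fractional_le {A : Finset ι} {l : ι → ℝ} {n : ℕ}
    (hl : ∀ i ∈ A, l i ∈ Set.Icc 0 1) (hF : #{i ∈ A | l i ∈ Set.Ioo 0 1} ≤ n + 1)
    (hsum : ∑ i ∈ A, l i = #A - (n + 1)) : ∃ i ∈ A, l i = 0 := by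
  by_contra! hpos
  set F := {i ∈ A | l i ∈ Set.Ioo 0 1}
  have hdefect : ∑ i ∈ A, (1 - l i) = ∑ i ∈ F, (1 - l i) := by
    refine (sum_filter_of_ne fun i hi h => ⟨lt_of_le_of_ne (hl i hi).1 (hpos i hi).symm, ?_⟩).symm
    exact lt_of_le_of_ne (hl i hi).2 fun h1 => h (by rw [h1, sub_self])
  have hlt : ∑ i ∈ F, (1 - l i) < n + 1 := by
    rcases F.eq_empty_or_nonempty with hF0 | hFne
    · rw [hF0, sum_empty]; positivity
    · calc ∑ i ∈ F, (1 - l i) < ∑ i ∈ F, 1 :=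
            sum_lt_sum_of_nonempty hFne fun i hi => by simp [(mem_filter.1 hi).2.1]
        _ ≤ n + 1 := by simpa using (Nat.cast_le (α := ℝ)).2 hF
  rw [← hdefect, sum_sub_distrib, hsum] at hlt
  simp at hlt

section Polytope

variable [Fintype ι] {v : ι → E} {A : Finset ι} {c : ℝ} {l : ι → ℝ}

lemma isCompact_steinitzPolytope (v : ι → E) (A : Finset ι) (c : ℝ) :
    IsCompact (steinitzPolytope v A c) := by
  have hbox : steinitzPolytope v A c ⊆ Set.univ.pi fun _ => Set.Icc 0 1 := fun l hl i _ => by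
    by_cases hi : i ∈ A
    · exact hl.2.1 i hi
    · simp [hl.1 i hi]
  refine (isCompact_univ_pi fun _ => isCompact_Icc).of_isClosed_subset ?_ hbox
  have hker : IsClosed {l : ι → ℝ | ∑ i, l i • v i = 0} :=
    (LinearMap.ker (Fintype.linearCombination ℝ v)).closed_of_finiteDimensional
  simp only [steinitzPolytope, Set.ofPred_and, Set.ofPred_forall]
  refine .inter (isClosed_iInter fun i => isClosed_iInter fun _ =>
    isClosed_eq (continuous_apply i) continuous_const) (.inter (isClosed_iInter fun i =>
    isClosed_iInter fun _ => isClosed_Icc.preimage (continuous_apply i)) (.inter ?_ hker))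
  exact isClosed_eq (continuous_finsetSum _ fun i _ => continuous_apply i) continuous_const

lemma smul_mem_steinitzPolytope (hl : l ∈ steinitzPolytope v A c) {a : ℝ} (ha₀ : 0 ≤ a)
    (ha₁ : a ≤ 1) : a • l ∈ steinitzPolytope v A (a * c) := by
  obtain ⟨hsupp, hbox, hsum, hsumv⟩ := hl
  refine ⟨fun i hi => by simp [hsupp i hi], fun i hi => ?_, ?_, ?_⟩
  · exact ⟨mul_nonneg ha₀ (hbox i hi).1, mul_le_one₀ ha₁ (hbox i hi).1 (hbox i hi).2⟩
  · simp [← mul_sum, hsum]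
  · simp [mul_smul, ← smul_sum, hsumv]

lemma mem_steinitzPolytope_erase [DecidableEq ι] (hl : l ∈ steinitzPolytope v A c) {i : ι}
    (hi : l i = 0) : l ∈ steinitzPolytope v (A.erase i) c := by
  obtain ⟨hsupp, hbox, hsum, hsumv⟩ := hl
  refine ⟨fun j hj => ?_, fun j hj => hbox j (mem_of_mem_erase hj), hsum, hsumv⟩
  by_cases hji : j = i
  · rwa [hji]
  · exact hsupp j fun hjA => hj (mem_erase.2 ⟨hji, hjA⟩)

lemma const_mem_steinitzPolytope_univ (hv : ∑ i, v i = 0) {a : ℝ} (ha : a ∈ Set.Icc 0 1) :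
    (fun _ => a) ∈ steinitzPolytope v univ (Fintype.card ι * a) := by
  refine ⟨fun i hi => absurd (mem_univ i) hi, fun _ _ => ha, by simp, ?_⟩
  rw [← smul_sum, hv, smul_zero]

lemma eq_zero_of_mem_extremePoints_steinitzPolytope
    (hl : l ∈ (steinitzPolytope v A c).extremePoints ℝ) {μ : ι → ℝ} (hμ : ∑ i, μ i = 0)
    (hμv : ∑ i, μ i • v i = 0) (hfrac : ∀ i, μ i ≠ 0 → l i ∈ Set.Ioo 0 1) : μ = 0 := by
  obtain ⟨⟨hsupp, hbox, hsum, hsumv⟩, hext⟩ := hl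
  have hbox' : ∀ i ∈ A, ∀ᶠ t in 𝓝 (0 : ℝ), l i + t * μ i ∈ Set.Icc 0 1 := by
    intro i hi
    by_cases hμi : μ i = 0
    · simpa [hμi] using hbox i hi
    · obtain ⟨hl₀, hl₁⟩ := hfrac i hμi
      exact ((continuous_const.add (continuous_id.mul continuous_const)).tendsto' 0 (l i)
        (by simp)).eventually (Icc_mem_nhds hl₀ hl₁)
  have hline : ∀ᶠ t in 𝓝 (0 : ℝ), l + t • μ ∈ steinitzPolytope v A c := by
    filter_upwards [(eventually_all_finset A).2 hbox'] with t ht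
    refine ⟨fun i hi => ?_, ht, ?_, ?_⟩
    · have hμi : μ i = 0 := by
        by_contra h
        exact (hfrac i h).1.ne' (hsupp i hi)
      simp [hsupp i hi, hμi]
    · simp [sum_add_distrib, ← mul_sum, hsum, hμ]
    · simp [add_smul, sum_add_distrib, mul_smul, ← smul_sum, hsumv, hμv]
  have hline' : ∀ᶠ t in 𝓝 (0 : ℝ), l - t • μ ∈ steinitzPolytope v A c := by
    simpa [sub_eq_add_neg] using (continuous_neg.tendsto' 0 0 neg_zero).eventually hline
  obtain ⟨t, ⟨hsub, hadd⟩, ht⟩ :=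
    (hline'.and hline).filter_mono nhdsWithin_le_nhds |>.and (self_mem_nhdsWithin (s := {0}ᶜ))
      |>.exists
  have hfix : l - t • μ = l := hext hsub hadd (mem_openSegment_sub_add l (t • μ))
  rw [sub_eq_self, smul_eq_zero] at hfix
  exact hfix.resolve_left ht

lemma card_fractional_le_of_mem_extremePoints [FiniteDimensional ℝ E]
    (hl : l ∈ (steinitzPolytope v A c).extremePoints ℝ) :
    #{i ∈ A | l i ∈ Set.Ioo 0 1} ≤ finrank ℝ E + 1 := by
  classical
  set F := {i ∈ A | l i ∈ Set.Ioo 0 1}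
  have hind : LinearIndepOn ℝ (fun i => ((1 : ℝ), v i)) (F : Set ι) := by
    refine linearIndepOn_finset_iff.2 fun g hg i hi => ?_
    have hg₁ : ∑ i ∈ F, g i = 0 := by simpa [Prod.fst_sum] using congrArg Prod.fst hg
    have hgv : ∑ i ∈ F, g i • v i = 0 := by simpa [Prod.snd_sum] using congrArg Prod.snd hg
    have hμ := eq_zero_of_mem_extremePoints_steinitzPolytope hl
      (μ := fun i => if i ∈ F then g i else 0) (by simpa [sum_ite_mem] using hg₁)
      (by simpa [ite_smul, sum_ite_mem] using hgv) fun j hj => by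
        by_cases hjF : j ∈ F
        · exact (mem_filter.1 hjF).2
        · exact absurd (if_neg hjF) hj
    simpa [hi] using congrFun hμ i
  simpa [finrank_prod, add_comm] using hind.fintype_card_le_finrank

lemma exists_erase_steinitzPolytope_nonempty [FiniteDimensional ℝ E] [DecidableEq ι]
    (hA : finrank ℝ E < #A) (h : (steinitzPolytope v A (#A - finrank ℝ E)).Nonempty) :
    ∃ i ∈ A, (steinitzPolytope v (A.erase i) (#(A.erase i) - finrank ℝ E)).Nonempty := by
  set d := finrank ℝ E
  obtain ⟨l, hl⟩ := h
  have hd : (d : ℝ) + 1 ≤ #A := by exact_mod_cast hA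
  set a := (#A - d - 1) / (#A - d : ℝ)
  have ha : a * (#A - d) = #A - (d + 1) := by
    rw [div_mul_cancel₀ _ (by linarith)]
    ring
  have hne : (steinitzPolytope v A (#A - (d + 1))).Nonempty :=
    ⟨a • l, ha ▸ smul_mem_steinitzPolytope hl (div_nonneg (by linarith) (by linarith))
      ((div_le_one (by linarith)).2 (by linarith))⟩
  obtain ⟨l', hl'⟩ := (isCompact_steinitzPolytope v A _).extremePoints_nonempty hne
  obtain ⟨hsupp, hbox, hsum, -⟩ := hl'.1
  have hsumA : ∑ i ∈ A, l' i = #A - (d + 1) := by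
    rwa [sum_subset (subset_univ A) fun i _ hi => hsupp i hi]
  obtain ⟨i, hi, hi0⟩ := exists_eq_zero_of_card_fractional_le hbox
    (card_fractional_le_of_mem_extremePoints hl') hsumA
  refine ⟨i, hi, l', ?_⟩
  rw [card_erase_of_mem hi, Nat.cast_pred (card_pos.2 ⟨i, hi⟩)]
  convert mem_steinitzPolytope_erase hl'.1 hi0 using 2
  ring

lemma Seminorm.apply_sum_le_of_mem_steinitzPolytope (p : Seminorm ℝ E) {M c : ℝ}
    (hv : ∀ i, p (v i) ≤ M) (hl : l ∈ steinitzPolytope v A (#A - c)) :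
    p (∑ i ∈ A, v i) ≤ M * c := by
  obtain ⟨hsupp, hbox, hsum, hsumv⟩ := hl
  have hsumA : ∑ i ∈ A, l i = #A - c := by
    rwa [sum_subset (subset_univ A) fun i _ hi => hsupp i hi]
  have hsumvA : ∑ i ∈ A, l i • v i = 0 := by
    rwa [sum_subset (subset_univ A) fun i _ hi => by simp [hsupp i hi]]
  have hrest : ∑ i ∈ A, v i = ∑ i ∈ A, (1 - l i) • v i := by
    simp [sub_smul, sum_sub_distrib, hsumvA]
  calc p (∑ i ∈ A, v i) ≤ ∑ i ∈ A, p ((1 - l i) • v i) :=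
        hrest ▸ le_sum_of_subadditive p (map_zero p).le (map_add_le_add p) _ _
    _ ≤ ∑ i ∈ A, (1 - l i) * M := sum_le_sum fun i hi => by
        rw [map_smul_eq_mul, Real.norm_of_nonneg (sub_nonneg.2 (hbox i hi).2)]
        exact mul_le_mul_of_nonneg_left (hv i) (sub_nonneg.2 (hbox i hi).2)
    _ = M * c := by rw [← sum_mul, sum_sub_distrib, hsumA]; simp; ring

end Polytope

lemma Seminorm.apply_sum_le_of_card_le (p : Seminorm ℝ E) {v : ι → E} {M c : ℝ} (hM : 0 ≤ M)
    (hv : ∀ i, p (v i) ≤ M) {A : Finset ι} (hA : #A ≤ c) : p (∑ i ∈ A, v i) ≤ M * c :=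
  calc p (∑ i ∈ A, v i) ≤ ∑ i ∈ A, p (v i) :=
        le_sum_of_subadditive p (map_zero p).le (map_add_le_add p) _ _
    _ ≤ #A * M := by simpa using sum_le_card_nsmul A _ M fun i _ => hv i
    _ ≤ M * c := by rw [mul_comm]; exact mul_le_mul_of_nonneg_left hA hM

theorem exists_nodup_list_forall_take_of_erase {α : Type*} [DecidableEq α]
    {P : Finset α → Prop} (hP : ∀ A, P A → A.Nonempty → ∃ i ∈ A, P (A.erase i)) {A : Finset α}
    (hA : P A) : ∃ L : List α, L.Nodup ∧ L.toFinset = A ∧ ∀ k, P (L.take k).toFinset := by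
  induction A using Finset.strongInduction with
  | H A ih =>
    rcases A.eq_empty_or_nonempty with rfl | hne
    · exact ⟨[], List.nodup_nil, rfl, fun k => by simpa using hA⟩
    obtain ⟨i, hi, hPi⟩ := hP A hA hne
    obtain ⟨L, hnodup, hL, htake⟩ := ih _ (erase_ssubset hi) hPi
    have hiL : i ∉ L := by simp [← List.mem_toFinset, hL]
    have hLi : (L ++ [i]).toFinset = A := by simp [hL, insert_erase hi]
    refine ⟨L ++ [i], hnodup.append (by simp) (by simpa using hiL), hLi, fun k => ?_⟩
    rcases le_or_gt k L.length with hk | hk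
    · rw [List.take_append_of_le_length hk]; exact htake k
    · rwa [List.take_of_length_le (by simp; omega), hLi]

lemma exists_perm_image_filter_lt_eq_toFinset_take {m : ℕ} {L : List (Fin m)} (hL : L.Nodup)
    (huniv : L.toFinset = univ) : ∃ π : Equiv.Perm (Fin m),
      ∀ k, (univ.filter fun i : Fin m => (i : ℕ) < k).image π = (L.take k).toFinset := by
  have hlen : L.length = m := by simpa [huniv] using (List.toFinset_card_of_nodup hL).symm
  let e := hL.getEquivOfForallMemList L fun x => by simp [← List.mem_toFinset, huniv]
  refine ⟨(finCongr hlen.symm).trans e, fun k => ?_⟩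
  ext x
  simp only [mem_image, mem_filter, mem_univ, true_and, List.mem_toFinset,
    List.mem_take_iff_getElem, lt_min_iff]
  constructor
  · rintro ⟨j, hj, rfl⟩
    exact ⟨j, ⟨hj, hlen.symm ▸ j.2⟩, rfl⟩
  · rintro ⟨j, ⟨hjk, hjL⟩, rfl⟩
    exact ⟨⟨j, hlen ▸ hjL⟩, hjk, rfl⟩

theorem Seminorm.exists_list_steinitz [Fintype ι] [DecidableEq ι] [FiniteDimensional ℝ E]
    (p : Seminorm ℝ E) {v : ι → E} {M : ℝ} (hM : 0 ≤ M) (hv : ∀ i, p (v i) ≤ M)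
    (hsum : ∑ i, v i = 0) : ∃ L : List ι, L.Nodup ∧ L.toFinset = univ ∧
      ∀ k, p (∑ i ∈ (L.take k).toFinset, v i) ≤ M * finrank ℝ E := by
  set d := finrank ℝ E
  let P : Finset ι → Prop := fun A => #A ≤ d ∨ (steinitzPolytope v A (#A - d)).Nonempty
  have hstep : ∀ A, P A → A.Nonempty → ∃ i ∈ A, P (A.erase i) := by
    rintro A hA ⟨j, hj⟩
    by_cases hAd : #A ≤ d
    · exact ⟨j, hj, .inl (card_erase_le.trans hAd)⟩
    · obtain ⟨i, hi, h⟩ :=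
        exists_erase_steinitzPolytope_nonempty (not_le.1 hAd) (hA.resolve_left hAd)
      exact ⟨i, hi, .inr h⟩
  have huniv : P univ := by
    rcases le_or_gt (Fintype.card ι) d with h | h
    · exact .inl h
    · have hdn : (d : ℝ) < Fintype.card ι := by exact_mod_cast h
      have hpos : (0 : ℝ) < Fintype.card ι := d.cast_nonneg.trans_lt hdn
      have ha : Fintype.card ι * ((Fintype.card ι - d) / Fintype.card ι : ℝ) =
          #(univ : Finset ι) - d := by
        rw [mul_div_cancel₀ _ hpos.ne', card_univ]
      exact .inr ⟨_, ha ▸ const_mem_steinitzPolytope_univ hsum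
        ⟨div_nonneg (by linarith) hpos.le, (div_le_one hpos).2 (by simp)⟩⟩
  obtain ⟨L, hnodup, hL, htake⟩ := exists_nodup_list_forall_take_of_erase hstep huniv
  refine ⟨L, hnodup, hL, fun k => ?_⟩
  rcases htake k with h | ⟨l, hl⟩
  · exact p.apply_sum_le_of_card_le hM hv (by exact_mod_cast h)
  · exact p.apply_sum_le_of_mem_steinitzPolytope hv hl

theorem stmt13 (d m : ℕ) (M : ℝ) (N : (Fin d → ℝ) → ℝ)
    (hN_add : ∀ x y, N (x + y) ≤ N x + N y)
    (hN_smul : ∀ (c : ℝ) x, N (c • x) = |c| * N x)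
    (u : Fin m → Fin d → ℝ)
    (hu_norm : ∀ i, N (u i) ≤ M) (hzero : ∑ i, u i = 0) :
    ∃ π : Equiv.Perm (Fin m), ∀ k : ℕ, 1 ≤ k → k ≤ m →
      N (∑ i ∈ Finset.univ.filter (fun i : Fin m => (i:ℕ) < k), u (π i))
        ≤ M * d := by
  let p : Seminorm ℝ (Fin d → ℝ) := Seminorm.of N hN_add hN_smul
  rcases Nat.eq_zero_or_pos m with rfl | hm
  · exact ⟨1, fun k hk hkm => by omega⟩
  have hM : 0 ≤ M := (apply_nonneg p (u ⟨0, hm⟩)).trans (hu_norm _)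
  obtain ⟨L, hnodup, hL, hbound⟩ := p.exists_list_steinitz hM hu_norm hzero
  obtain ⟨π, hπ⟩ := exists_perm_image_filter_lt_eq_toFinset_take hnodup hL
  refine ⟨π, fun k _ _ => ?_⟩
  rw [← sum_image π.injective.injOn, hπ k]
  have hk := hbound k
  rwa [finrank_fin_fun] at hk
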